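/- Let F = ℚ(α, β) with α, β algebraically independent indeterminates over ℚ and let η ∈ {α, β}. The 3-dimensional commutative non-associative F-algebra 3C(η) with basis a₀, a₁, a₂ and multiplication a_i² = a_i and a_i a_j = (η/2)(a_i + a_j − a_k) for {i, j, k} = {0, 1, 2} is simple: its only ideals are 0 and the whole algebra. -/

import Mathlib

/-!
For distinct `i, j, k` put `d = b j - b k`. Then `b i * d = η • d`, `b i * (b j + b k) = η • b i`
and `d * d = η • b i + (1 - η) • (b j + b k)`, so an ideal containing `d` contains `b i`, hence
`b j + b k`, hence everything. A nonzero `x = p • b i + q • b j + r • b k` in an ideal either has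
`q ≠ r`, and then `b i * (b i * x) - b i * x = ((η - 1) η (q - r) / 2) • d`, or (after permuting)
`p = q = r`, and then `b 0 * x = ((1 + η) p) • b 0`. All coefficients that get inverted are
nonzero as soon as `η ∉ {0, 1, 2, -1}`, which holds for an indeterminate of `ℚ(α, β)`.
-/

/-- The field `ℚ(α, β)` of rational functions in two algebraically independent
indeterminates over `ℚ`. -/
noncomputable abbrev QabF : Type := FractionRing (MvPolynomial (Fin 2) ℚ)

/-- The indeterminate `α` of `ℚ(α, β)`. -/
noncomputable def αQ : QabF := algebraMap (MvPolynomial (Fin 2) ℚ) QabF (MvPolynomial.X 0)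

/-- The indeterminate `β` of `ℚ(α, β)`. -/
noncomputable def βQ : QabF := algebraMap (MvPolynomial (Fin 2) ℚ) QabF (MvPolynomial.X 1)

structure IsBasis3C {F V : Type*} [Field F] [NonUnitalNonAssocCommRing V] [Module F V]
    (η : F) (b : Module.Basis (Fin 3) F V) : Prop where
  mul_self : ∀ i, b i * b i = b i
  mul_of_ne : ∀ i j k, i ≠ j → j ≠ k → i ≠ k → b i * b j = (η / 2) • (b i + b j - b k)

namespace IsBasis3C

variable {F V : Type*} [Field F] [NonUnitalNonAssocCommRing V] [Module F V]
  [NeZero (2 : F)] {η : F} {b : Module.Basis (Fin 3) F V} (h : IsBasis3C η b) {i j k : Fin 3}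
include h

theorem mul_sub_eq_smul (hij : i ≠ j) (hjk : j ≠ k) (hik : i ≠ k) :
    b i * (b j - b k) = η • (b j - b k) := by
  rw [mul_sub, h.mul_of_ne i j k hij hjk hik, h.mul_of_ne i k j hik hjk.symm hij]
  match_scalars <;> field_simp <;> ring

theorem mul_add_eq_smul (hij : i ≠ j) (hjk : j ≠ k) (hik : i ≠ k) :
    b i * (b j + b k) = η • b i := by
  rw [mul_add, h.mul_of_ne i j k hij hjk hik, h.mul_of_ne i k j hik hjk.symm hij]
  match_scalars <;> field_simp <;> ring

theorem sub_mul_sub_self (hij : i ≠ j) (hjk : j ≠ k) (hik : i ≠ k) :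
    (b j - b k) * (b j - b k) = η • b i + (1 - η) • (b j + b k) := by
  rw [mul_sub, sub_mul, sub_mul, h.mul_self, h.mul_self, mul_comm (b k),
    h.mul_of_ne j k i hjk hik.symm hij.symm]
  match_scalars <;> field_simp <;> ring

theorem mul_coords [SMulCommClass F V V] (hij : i ≠ j) (hjk : j ≠ k) (hik : i ≠ k) (p q r : F) :
    b i * (p • b i + q • b j + r • b k) =
      (p + η / 2 * (q + r)) • b i + (η / 2 * (q - r)) • (b j - b k) := by
  rw [mul_add, mul_add, mul_smul_comm, mul_smul_comm, mul_smul_comm, h.mul_self,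
    h.mul_of_ne i j k hij hjk hik, h.mul_of_ne i k j hik hjk.symm hij]
  match_scalars <;> field_simp <;> ring

variable {I : Submodule F V} (hI : ∀ v : V, ∀ x ∈ I, v * x ∈ I)
include hI

theorem sub_mem_of_mem (hη0 : η ≠ 0) (hij : i ≠ j) (hjk : j ≠ k) (hik : i ≠ k)
    (hi : b i ∈ I) : b j - b k ∈ I := by
  refine (I.smul_mem_iff (div_ne_zero hη0 two_ne_zero)).1 ?_
  convert I.sub_mem (hI (b j) _ hi) (I.smul_mem (η / 2) hi) using 1
  rw [h.mul_of_ne j i k hij.symm hik hjk]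
  module

variable [SMulCommClass F V V]

theorem mem_of_sub_mem (hη0 : η ≠ 0) (hη2 : η ≠ 2) (hij : i ≠ j) (hjk : j ≠ k) (hik : i ≠ k)
    (hd : b j - b k ∈ I) : b i ∈ I := by
  have hw : η • b i + (1 - η) • (b j + b k) ∈ I := h.sub_mul_sub_self hij hjk hik ▸ hI _ _ hd
  have hmul : b i * (η • b i + (1 - η) • (b j + b k)) = (η * (2 - η)) • b i := by
    rw [mul_add, mul_smul_comm, mul_smul_comm, h.mul_self, h.mul_add_eq_smul hij hjk hik]
    module
  refine (I.smul_mem_iff (mul_ne_zero hη0 (sub_ne_zero.2 hη2.symm))).1 ?_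
  exact hmul ▸ hI _ _ hw

theorem eq_top_of_sub_mem (hη0 : η ≠ 0) (hη1 : η ≠ 1) (hη2 : η ≠ 2)
    (hij : i ≠ j) (hjk : j ≠ k) (hik : i ≠ k) (hd : b j - b k ∈ I) : I = ⊤ := by
  have hi := h.mem_of_sub_mem hI hη0 hη2 hij hjk hik hd
  have hadd : b j + b k ∈ I := by
    refine (I.smul_mem_iff (sub_ne_zero.2 hη1.symm)).1 ?_
    convert I.sub_mem (h.sub_mul_sub_self hij hjk hik ▸ hI _ _ hd) (I.smul_mem η hi) using 1
    module
  have h2 : (2 : F) ≠ 0 := two_ne_zero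
  have hj : b j ∈ I := (I.smul_mem_iff h2).1 <| by
    convert I.add_mem hadd hd using 1; module
  have hk : b k ∈ I := (I.smul_mem_iff h2).1 <| by
    convert I.sub_mem hadd hd using 1; module
  rw [eq_top_iff, ← b.span_eq, Submodule.span_le]
  rintro _ ⟨l, rfl⟩
  obtain rfl | rfl | rfl : l = i ∨ l = j ∨ l = k := by omega
  exacts [hi, hj, hk]

theorem sub_mem_of_coord_ne (hη0 : η ≠ 0) (hη1 : η ≠ 1)
    (hij : i ≠ j) (hjk : j ≠ k) (hik : i ≠ k) {p q r : F}
    (hx : p • b i + q • b j + r • b k ∈ I) (hqr : q ≠ r) : b j - b k ∈ I := by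
  set x := p • b i + q • b j + r • b k
  have hmul : b i * (b i * x) - b i * x = ((η - 1) * (η / 2 * (q - r))) • (b j - b k) := by
    rw [h.mul_coords hij hjk hik, mul_add, mul_smul_comm, mul_smul_comm, h.mul_self,
      h.mul_sub_eq_smul hij hjk hik]
    module
  refine (I.smul_mem_iff ?_).1 (hmul ▸ I.sub_mem (hI _ _ (hI _ _ hx)) (hI _ _ hx))
  exact mul_ne_zero (sub_ne_zero.2 hη1) (mul_ne_zero (div_ne_zero hη0 two_ne_zero)
    (sub_ne_zero.2 hqr))

theorem eq_bot_or_eq_top (hη0 : η ≠ 0) (hη1 : η ≠ 1) (hη2 : η ≠ 2) (hη_neg_one : 1 + η ≠ 0) :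
    I = ⊥ ∨ I = ⊤ := by
  refine or_iff_not_imp_left.2 fun hI0 ↦ ?_
  obtain ⟨x, hx, hx0⟩ := I.ne_bot_iff.1 hI0
  obtain ⟨p, q, r, rfl⟩ : ∃ p q r : F, p • b 0 + q • b 1 + r • b 2 = x :=
    ⟨_, _, _, by rw [← Fin.sum_univ_three fun l ↦ b.repr x l • b l, b.sum_repr]⟩
  by_cases hqr : q = r
  · by_cases hpr : p = r
    · have hr : r ≠ 0 := fun hr0 ↦ hx0 <| by simp [hpr, hqr, hr0]
      have h0 : ((1 + η) * r) • b 0 ∈ I := by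
        convert hI (b 0) _ hx using 1
        rw [h.mul_coords (by decide) (by decide) (by decide), hpr, hqr]
        match_scalars <;> field_simp <;> ring
      exact h.eq_top_of_sub_mem hI hη0 hη1 hη2 (i := 0) (j := 1) (k := 2) (by decide) (by decide)
        (by decide) <| h.sub_mem_of_mem hI hη0 (by decide) (by decide) (by decide) <|
          (I.smul_mem_iff (mul_ne_zero hη_neg_one hr)).1 h0
    · have hx' : q • b 1 + p • b 0 + r • b 2 ∈ I := by convert hx using 1; abel
      exact h.eq_top_of_sub_mem hI hη0 hη1 hη2 (i := 1) (j := 0) (k := 2) (by decide) (by decide)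
        (by decide) (h.sub_mem_of_coord_ne hI hη0 hη1 (by decide) (by decide) (by decide) hx' hpr)
  · exact h.eq_top_of_sub_mem hI hη0 hη1 hη2 (i := 0) (j := 1) (k := 2) (by decide) (by decide)
      (by decide) (h.sub_mem_of_coord_ne hI hη0 hη1 (by decide) (by decide) (by decide) hx hqr)

end IsBasis3C

theorem MvPolynomial.X_ne_C {σ R : Type*} [CommSemiring R] [Nontrivial R] (n : σ) (c : R) :
    (X n : MvPolynomial σ R) ≠ C c := fun h ↦ by
  have h0 := congrArg (eval fun _ ↦ 0) h
  have h1 := congrArg (eval fun _ ↦ 1) h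
  simp only [eval_X, eval_C] at h0 h1
  exact one_ne_zero (h1.trans h0.symm)

theorem FractionRing.algebraMap_X_ne_ratCast {σ : Type*} (n : σ) (q : ℚ) :
    algebraMap (MvPolynomial σ ℚ) (FractionRing (MvPolynomial σ ℚ)) (MvPolynomial.X n) ≠ q := by
  rw [← eq_ratCast (algebraMap ℚ _) q, IsScalarTower.algebraMap_apply ℚ (MvPolynomial σ ℚ),
    MvPolynomial.algebraMap_eq]
  exact (IsFractionRing.injective _ _).ne (MvPolynomial.X_ne_C n q)

theorem stmt_19_general {V : Type*} [NonUnitalNonAssocCommRing V] [Module QabF V]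
    [SMulCommClass QabF V V]
    (η : QabF) (hη : η = αQ ∨ η = βQ)
    (b : Module.Basis (Fin 3) QabF V)
    (hsq : ∀ i : Fin 3, b i * b i = b i)
    (hmul : ∀ i j k : Fin 3, i ≠ j → j ≠ k → i ≠ k →
      b i * b j = (η / 2) • (b i + b j - b k))
    (I : Submodule QabF V) (hI : ∀ v : V, ∀ x ∈ I, v * x ∈ I) :
    I = ⊥ ∨ I = ⊤ := by
  have hη_ne_rat : ∀ q : ℚ, η ≠ q := by
    rcases hη with rfl | rfl
    exacts [FractionRing.algebraMap_X_ne_ratCast 0, FractionRing.algebraMap_X_ne_ratCast 1]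
  refine (IsBasis3C.mk hsq hmul).eq_bot_or_eq_top hI (by exact_mod_cast hη_ne_rat 0)
    (by exact_mod_cast hη_ne_rat 1) (by exact_mod_cast hη_ne_rat 2) fun h ↦ hη_ne_rat (-1) ?_
  push_cast
  linear_combination h

/-- **Lemma 5.3.** Let `F = ℚ(α, β)` with `α, β` algebraically independent indeterminates over
`ℚ` and let `η ∈ {α, β}`.  The 3-dimensional commutative non-associative `F`-algebra `3C(η)`
with basis `a₀, a₁, a₂`, products `a_i² = a_i` and `a_i a_j = (η/2)(a_i + a_j − a_k)` for
`{i, j, k} = {0, 1, 2}`, is simple: its only ideals are `0` and the whole algebra. -/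
theorem stmt_19 {V : Type*} [NonUnitalNonAssocCommRing V] [Module QabF V]
    [SMulCommClass QabF V V] [IsScalarTower QabF V V]
    (η : QabF) (hη : η = αQ ∨ η = βQ)
    (b : Module.Basis (Fin 3) QabF V)
    (hsq : ∀ i : Fin 3, b i * b i = b i)
    (hmul : ∀ i j k : Fin 3, i ≠ j → j ≠ k → i ≠ k →
      b i * b j = (η / 2) • (b i + b j - b k))
    (I : Submodule QabF V) (hI : ∀ v : V, ∀ x ∈ I, v * x ∈ I) :
    I = ⊥ ∨ I = ⊤ :=
  stmt_19_general η hη b hsq hmul I hI
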